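/- The number of minimal 3D polyominoes inscribed in a 2×b×k prism equals Σ_{P} Σ_{x∈P} 2^{deg(x)}, where the outer sum is over minimal 2D polyominoes P inscribed in a b×k rectangle and deg(x) is the number of cells of P adjacent to x. -/

import Mathlib

/-- Edge-adjacency of 2D cells. -/
def Adj2 (a b : ℕ × ℕ) : Prop :=
  (a.1 = b.1 ∧ (a.2 + 1 = b.2 ∨ b.2 + 1 = a.2)) ∨
  (a.2 = b.2 ∧ (a.1 + 1 = b.1 ∨ b.1 + 1 = a.1))

attribute [local instance] Classical.propDecidable

def Connected2 (P : Finset (ℕ × ℕ)) : Prop :=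
  ∀ a ∈ P, ∀ b ∈ P,
    Relation.ReflTransGen (fun u v => u ∈ P ∧ v ∈ P ∧ Adj2 u v) a b

def Inscribed2 (b k : ℕ) (P : Finset (ℕ × ℕ)) : Prop :=
  (∀ c ∈ P, c.1 < b ∧ c.2 < k) ∧
  (∃ c ∈ P, c.1 = 0) ∧ (∃ c ∈ P, c.1 = b - 1) ∧
  (∃ c ∈ P, c.2 = 0) ∧ (∃ c ∈ P, c.2 = k - 1)

/-- Minimal 2D polyomino inscribed in a `b × k` rectangle (area `b + k - 1`). -/
def MinPoly2D (b k : ℕ) (P : Finset (ℕ × ℕ)) : Prop :=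
  P.Nonempty ∧ Connected2 P ∧ Inscribed2 b k P ∧ P.card = b + k - 1

/-- The degree of a cell `x` in a 2D polyomino `P`. -/
noncomputable def deg2 (P : Finset (ℕ × ℕ)) (x : ℕ × ℕ) : ℕ :=
  (P.filter fun y => Adj2 x y).card

/-- Face-adjacency of 3D cells. -/
def Adj3 (a b : ℕ × ℕ × ℕ) : Prop :=
  (a.1 = b.1 ∧ Adj2 a.2 b.2) ∨
  (a.2 = b.2 ∧ (a.1 + 1 = b.1 ∨ b.1 + 1 = a.1))

def Connected3 (P : Finset (ℕ × ℕ × ℕ)) : Prop :=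
  ∀ a ∈ P, ∀ b ∈ P,
    Relation.ReflTransGen (fun u v => u ∈ P ∧ v ∈ P ∧ Adj3 u v) a b

def Inscribed3 (b k h : ℕ) (P : Finset (ℕ × ℕ × ℕ)) : Prop :=
  (∀ c ∈ P, c.1 < b ∧ c.2.1 < k ∧ c.2.2 < h) ∧
  (∃ c ∈ P, c.1 = 0) ∧ (∃ c ∈ P, c.1 = b - 1) ∧
  (∃ c ∈ P, c.2.1 = 0) ∧ (∃ c ∈ P, c.2.1 = k - 1) ∧
  (∃ c ∈ P, c.2.2 = 0) ∧ (∃ c ∈ P, c.2.2 = h - 1)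

/-- Minimal 3D polyomino inscribed in a `b × k × h` prism (volume `b + k + h - 2`). -/
def MinPoly3D (b k h : ℕ) (P : Finset (ℕ × ℕ × ℕ)) : Prop :=
  P.Nonempty ∧ Connected3 P ∧ Inscribed3 b k h P ∧ P.card = b + k + h - 2

/-!
The cells of a connected polyomino `P` in a `b × k` rectangle span a connected graph, and every
column (row) contains a cell without an upper (right) neighbour, so the graph has at most
`(#P - b) + (#P - k)` edges and at least `#P - 1`. Hence `#P ≥ b + k - 1`, and at equality the
cell graph is a tree.

A minimal polyomino `Q` in the `2 × b × k` prism has `b + k` cells and a connected projection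
`P`, and `#Q = #P + #(doubled columns)`; so `Q` has at most one doubled column, and at least one
since otherwise it could never change layer. Thus `P` is minimal with one doubled cell `x`. Away
from `x` a path in `Q` cannot change layer, so each branch of the tree `P` at `x` (one per
neighbour of `x`) lies in a single layer, and each of the `2 ^ deg x` choices of layers gives a
minimal polyomino.
-/

open Relation Finset SimpleGraph

def StepIn {α : Type*} (s : Finset α) (R : α → α → Prop) (u v : α) : Prop :=
  u ∈ s ∧ v ∈ s ∧ R u v

namespace Relation.ReflTransGen

variable {α : Type*} {s : Finset α} {R : α → α → Prop} {a b : α}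

theorem eq_of_forall_imp_eq {β : Type*} {r : α → α → Prop} {f : α → β}
    (hf : ∀ u v, r u v → f u = f v) (h : ReflTransGen r a b) : f a = f b := by
  induction h with
  | refl => rfl
  | tail _ hcd ih => exact ih.trans (hf _ _ hcd)

theorem exists_mem_eq_of_le {f : α → ℕ} (hf : ∀ u v, R u v → f v ≤ f u + 1)
    (h : ReflTransGen (StepIn s R) a b) (ha : a ∈ s) {m : ℕ} (ham : f a ≤ m) (hmb : m ≤ f b) :
    ∃ c ∈ s, f c = m := by
  induction h with
  | refl => exact ⟨a, ha, by omega⟩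
  | @tail c d _ hcd ih =>
    by_cases hm : m ≤ f c
    · exact ih hm
    · exact ⟨d, hcd.2.1, by have := hf c d hcd.2.2; omega⟩

theorem exists_first_entry {p : α → Prop} [DecidablePred p] (h : ReflTransGen (StepIn s R) a b)
    (ha : ¬ p a) (hb : p b) :
    ∃ c d, ReflTransGen (StepIn (s.filter (¬ p ·)) R) a c ∧ StepIn s R c d ∧ ¬ p c ∧ p d := by
  induction h using ReflTransGen.head_induction_on with
  | refl => exact absurd hb ha
  | @head a c hac _ ih =>
    by_cases hc : p c
    · exact ⟨a, c, .refl, hac, ha, hc⟩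
    · obtain ⟨d, e, hcd, hde, hd, he⟩ := ih hc
      exact ⟨d, e, .head ⟨mem_filter.2 ⟨hac.1, ha⟩, mem_filter.2 ⟨hac.2.1, hc⟩, hac.2.2⟩ hcd,
        hde, hd, he⟩

end Relation.ReflTransGen

theorem SimpleGraph.reachable_of_reflTransGen {α : Type*} {s : Finset α} {G : SimpleGraph s}
    {r : α → α → Prop} (hr : ∀ u v, r u v → ∃ (hu : u ∈ s) (hv : v ∈ s), G.Adj ⟨u, hu⟩ ⟨v, hv⟩)
    {a b : α} (h : ReflTransGen r a b) (ha : a ∈ s) (hb : b ∈ s) : G.Reachable ⟨a, ha⟩ ⟨b, hb⟩ := by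
  induction h with
  | refl => rfl
  | tail _ hcd ih =>
    obtain ⟨hc, hd, hadj⟩ := hr _ _ hcd
    exact (ih hc).trans hadj.reachable

theorem Finset.card_filter_add_card_image_le {α β : Type*} [DecidableEq α] [DecidableEq β]
    (s : Finset α) (key : α → β) (height : α → ℕ) (next : α → α) (hkey : ∀ u, key (next u) = key u)
    (hheight : ∀ u, height (next u) = height u + 1) :
    #(s.filter fun u => next u ∈ s) + #(s.image key) ≤ #s := by
  have hfiber : ∀ i ∈ s.image key,
      #((s.filter fun u => next u ∈ s).filter fun u => key u = i) + 1 ≤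
        #(s.filter fun u => key u = i) := by
    intro i hi
    obtain ⟨v, hv, rfl⟩ := mem_image.1 hi
    -- an element of maximal height in its fibre has no successor in `s`
    obtain ⟨u, hu, hmax⟩ := exists_max_image (s.filter fun u => key u = key v) height
      ⟨v, mem_filter.2 ⟨hv, rfl⟩⟩
    refine card_lt_card ((ssubset_iff_of_subset ?_).2 ⟨u, hu, ?_⟩)
    · intro w
      simp only [mem_filter]
      tauto
    · simp only [mem_filter, not_and]
      intro ⟨_, hnext⟩ hkeyu
      have := hmax (next u) (mem_filter.2 ⟨hnext, (hkey u).trans hkeyu⟩)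
      rw [hheight] at this
      omega
  have hmaps : ∀ u ∈ s, key u ∈ s.image key := fun u hu => mem_image_of_mem key hu
  calc #(s.filter fun u => next u ∈ s) + #(s.image key)
      = ∑ i ∈ s.image key, (#((s.filter fun u => next u ∈ s).filter fun u => key u = i) + 1) := by
        rw [sum_add_distrib, card_eq_sum_card_fiberwise fun u hu => hmaps u (mem_filter.1 hu).1,
          card_eq_sum_ones (s.image key)]
    _ ≤ ∑ i ∈ s.image key, #(s.filter fun u => key u = i) := sum_le_sum hfiber
    _ = #s := (card_eq_sum_card_fiberwise hmaps).symm

theorem Adj2.symm {u v : ℕ × ℕ} (h : Adj2 u v) : Adj2 v u := by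
  unfold Adj2 at *; omega

theorem Adj2.ne {u v : ℕ × ℕ} (h : Adj2 u v) : u ≠ v := by
  rintro rfl; unfold Adj2 at h; omega

instance (s : Finset (ℕ × ℕ)) : Std.Symm (StepIn s Adj2) :=
  ⟨fun _ _ h => ⟨h.2.1, h.1, h.2.2.symm⟩⟩

def cellGraph (P : Finset (ℕ × ℕ)) : SimpleGraph P where
  Adj u v := Adj2 u v
  symm := ⟨fun _ _ => Adj2.symm⟩
  loopless := ⟨fun _ h => h.ne rfl⟩

section Polyomino2D

variable {P : Finset (ℕ × ℕ)} {b k : ℕ}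

theorem Connected2.cellGraph_connected (h : Connected2 P) (hne : P.Nonempty) :
    (cellGraph P).Connected :=
  have : Nonempty P := hne.to_subtype
  .mk fun u v => reachable_of_reflTransGen (fun _ _ h => ⟨h.1, h.2.1, h.2.2⟩)
    (h u u.2 v v.2) u.2 v.2

theorem card_edgeSet_cellGraph_le (P : Finset (ℕ × ℕ)) :
    Nat.card (cellGraph P).edgeSet ≤
      #(P.filter fun u => (u.1, u.2 + 1) ∈ P) + #(P.filter fun u => (u.1 + 1, u.2) ∈ P) := by
  set up := P.filter fun u => (u.1, u.2 + 1) ∈ P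
  set right := P.filter fun u => (u.1 + 1, u.2) ∈ P
  set E := up.image (fun u => s(u, (u.1, u.2 + 1))) ∪ right.image (fun u => s(u, (u.1 + 1, u.2)))
  have hsub : Sym2.map Subtype.val '' (cellGraph P).edgeSet ⊆ E := by
    rintro _ ⟨e, he, rfl⟩
    induction e with | _ a b => ?_
    obtain ⟨⟨a₁, a₂⟩, ha⟩ := a
    obtain ⟨⟨b₁, b₂⟩, hb⟩ := b
    change Adj2 _ _ at he
    simp only [Adj2] at he
    simp only [Sym2.map_mk, coe_union, coe_image, Set.mem_union, Set.mem_image, mem_coe,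
      mem_filter, E, up, right]
    rcases he with ⟨rfl, rfl | rfl⟩ | ⟨rfl, rfl | rfl⟩
    · exact .inl ⟨_, ⟨ha, hb⟩, rfl⟩
    · exact .inl ⟨_, ⟨hb, ha⟩, Sym2.eq_swap⟩
    · exact .inr ⟨_, ⟨ha, hb⟩, rfl⟩
    · exact .inr ⟨_, ⟨hb, ha⟩, Sym2.eq_swap⟩
  calc Nat.card (cellGraph P).edgeSet
      = (Sym2.map Subtype.val '' (cellGraph P).edgeSet).ncard := by
        rw [Set.ncard_image_of_injective _ (Sym2.map.injective Subtype.val_injective),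
          Nat.card_coe_set_eq]
    _ ≤ #E :=
        (Set.ncard_le_ncard hsub (finite_toSet _)).trans_eq (Set.ncard_coe_finset _)
    _ ≤ #up + #right := (card_union_le _ _).trans (add_le_add card_image_le card_image_le)

theorem Inscribed2.range_subset_image_fst (hins : Inscribed2 b k P) (hconn : Connected2 P) :
    range b ⊆ P.image Prod.fst := by
  obtain ⟨-, ⟨c, hc, hc0⟩, ⟨d, hd, hd1⟩, -, -⟩ := hins
  intro m hm
  obtain ⟨e, he, rfl⟩ := (hconn c hc d hd).exists_mem_eq_of_le (f := Prod.fst) (m := m)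
    (fun u v h => by unfold Adj2 at h; omega) hc (by omega) (by rw [mem_range] at hm; omega)
  exact mem_image_of_mem _ he

theorem Inscribed2.range_subset_image_snd (hins : Inscribed2 b k P) (hconn : Connected2 P) :
    range k ⊆ P.image Prod.snd := by
  obtain ⟨-, -, -, ⟨c, hc, hc0⟩, ⟨d, hd, hd1⟩⟩ := hins
  intro m hm
  obtain ⟨e, he, rfl⟩ := (hconn c hc d hd).exists_mem_eq_of_le (f := Prod.snd) (m := m)
    (fun u v h => by unfold Adj2 at h; omega) hc (by omega) (by rw [mem_range] at hm; omega)
  exact mem_image_of_mem _ he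

theorem Inscribed2.subset_range_product (hins : Inscribed2 b k P) :
    P ⊆ range b ×ˢ range k := fun c hc => by
  simpa [mem_product] using hins.1 c hc

theorem Inscribed2.card_edgeSet_add_le (hins : Inscribed2 b k P) (hconn : Connected2 P) :
    Nat.card (cellGraph P).edgeSet + b + k ≤ 2 * #P := by
  have hcols := card_filter_add_card_image_le P Prod.fst Prod.snd (fun u => (u.1, u.2 + 1))
    (fun _ => rfl) (fun _ => rfl)
  have hrows := card_filter_add_card_image_le P Prod.snd Prod.fst (fun u => (u.1 + 1, u.2))
    (fun _ => rfl) (fun _ => rfl)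
  have hb := card_le_card (hins.range_subset_image_fst hconn)
  have hk := card_le_card (hins.range_subset_image_snd hconn)
  rw [card_range] at hb hk
  have := card_edgeSet_cellGraph_le P
  omega

theorem Connected2.card_le_card_edgeSet_add_one (hconn : Connected2 P) (hne : P.Nonempty) :
    #P ≤ Nat.card (cellGraph P).edgeSet + 1 := by
  simpa using (hconn.cellGraph_connected hne).card_vert_le_card_edgeSet_add_one

theorem Inscribed2.add_le_card_add_one (hins : Inscribed2 b k P) (hconn : Connected2 P)
    (hne : P.Nonempty) : b + k ≤ #P + 1 := by
  have := hins.card_edgeSet_add_le hconn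
  have := hconn.card_le_card_edgeSet_add_one hne
  omega

theorem MinPoly2D.isTree (hP : MinPoly2D b k P) : (cellGraph P).IsTree := by
  obtain ⟨hne, hconn, hins, hcard⟩ := hP
  have := hins.card_edgeSet_add_le hconn
  have := hconn.card_le_card_edgeSet_add_one hne
  have := hne.card_pos
  refine isTree_iff_connected_and_card.2 ⟨hconn.cellGraph_connected hne, ?_⟩
  rw [Nat.card_eq_finsetCard]
  omega

end Polyomino2D

def IsBranchRoot (P : Finset (ℕ × ℕ)) (x y z : ℕ × ℕ) : Prop :=
  z ∈ P ∧ Adj2 x z ∧ ReflTransGen (StepIn (P.erase x) Adj2) y z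

noncomputable def branchRoot (P : Finset (ℕ × ℕ)) (x y : ℕ × ℕ) : ℕ × ℕ :=
  Classical.epsilon (IsBranchRoot P x y)

section BranchRoot

variable {P : Finset (ℕ × ℕ)} {x y z : ℕ × ℕ}

theorem Connected2.exists_isBranchRoot (hconn : Connected2 P) (hx : x ∈ P) (hy : y ∈ P)
    (hyx : y ≠ x) : ∃ z, IsBranchRoot P x y z := by
  obtain ⟨z, x', hyz, hzx, -, rfl⟩ :=
    (hconn y hy x hx).exists_first_entry (p := (· = x)) hyx rfl
  exact ⟨z, hzx.1, hzx.2.2.symm, by simpa only [← ne_eq, filter_ne'] using hyz⟩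

/-- In a tree every edge is a bridge, so two branch roots of `y` would close a cycle through `x`. -/
theorem IsBranchRoot.unique (htree : (cellGraph P).IsTree) (hx : x ∈ P)
    {z₁ z₂ : ℕ × ℕ} (h₁ : IsBranchRoot P x y z₁) (h₂ : IsBranchRoot P x y z₂) : z₁ = z₂ := by
  by_contra hne
  obtain ⟨hz₁, hxz₁, hyz₁⟩ := h₁
  obtain ⟨hz₂, hxz₂, hyz₂⟩ := h₂
  have hbridge := isAcyclic_iff_forall_adj_isBridge.1 htree.isAcyclic
    (show (cellGraph P).Adj ⟨x, hx⟩ ⟨z₁, hz₁⟩ from hxz₁)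
  refine isBridge_iff.1 hbridge ?_
  have hxz₂' : ((cellGraph P).deleteEdges {s(⟨x, hx⟩, ⟨z₁, hz₁⟩)}).Adj ⟨x, hx⟩ ⟨z₂, hz₂⟩ := by
    refine deleteEdges_adj.2 ⟨hxz₂, ?_⟩
    simp [Ne.symm hne, hxz₁.ne]
  refine hxz₂'.reachable.trans (reachable_of_reflTransGen ?_
    ((Std.Symm.symm _ _ hyz₂).trans hyz₁) hz₂ hz₁)
  rintro u v ⟨hu, hv, huv⟩
  refine ⟨mem_of_mem_erase hu, mem_of_mem_erase hv, deleteEdges_adj.2 ⟨huv, ?_⟩⟩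
  simp [ne_of_mem_erase hu, ne_of_mem_erase hv]

theorem IsBranchRoot.branchRoot_eq (htree : (cellGraph P).IsTree) (hx : x ∈ P)
    (h : IsBranchRoot P x y z) : branchRoot P x y = z :=
  (Classical.epsilon_spec ⟨z, h⟩).unique htree hx h

theorem Connected2.isBranchRoot_branchRoot (hconn : Connected2 P) (hx : x ∈ P) (hy : y ∈ P)
    (hyx : y ≠ x) : IsBranchRoot P x y (branchRoot P x y) :=
  Classical.epsilon_spec (hconn.exists_isBranchRoot hx hy hyx)

theorem branchRoot_eq_self (htree : (cellGraph P).IsTree) (hx : x ∈ P) (hz : z ∈ P)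
    (hxz : Adj2 x z) : branchRoot P x z = z :=
  IsBranchRoot.branchRoot_eq htree hx ⟨hz, hxz, .refl⟩

theorem branchRoot_eq_of_stepIn (hconn : Connected2 P) (htree : (cellGraph P).IsTree)
    (hx : x ∈ P) {u v : ℕ × ℕ} (h : StepIn (P.erase x) Adj2 u v) :
    branchRoot P x u = branchRoot P x v := by
  obtain ⟨hvP, hxv, hv⟩ :=
    hconn.isBranchRoot_branchRoot hx (mem_of_mem_erase h.2.1) (ne_of_mem_erase h.2.1)
  exact IsBranchRoot.branchRoot_eq htree hx ⟨hvP, hxv, .head h hv⟩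

end BranchRoot

instance (s : Finset (ℕ × ℕ × ℕ)) : Std.Symm (StepIn s Adj3) :=
  ⟨fun _ _ ⟨hu, hv, h⟩ => ⟨hv, hu, h.elim (fun h => .inl ⟨h.1.symm, h.2.symm⟩)
    (fun h => .inr ⟨h.1.symm, h.2.symm⟩)⟩⟩

def layer (Q : Finset (ℕ × ℕ × ℕ)) (l : ℕ) : Finset (ℕ × ℕ) :=
  (Q.filter (·.1 = l)).image Prod.snd

def projection (Q : Finset (ℕ × ℕ × ℕ)) : Finset (ℕ × ℕ) :=
  Q.image Prod.snd

def doubled (Q : Finset (ℕ × ℕ × ℕ)) : Finset (ℕ × ℕ) :=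
  layer Q 0 ∩ layer Q 1

section Layers

variable {Q : Finset (ℕ × ℕ × ℕ)} {l : ℕ} {y : ℕ × ℕ}

@[simp]
theorem mem_layer : y ∈ layer Q l ↔ (l, y) ∈ Q := by
  simp [layer]

theorem mem_projection : y ∈ projection Q ↔ ∃ l, (l, y) ∈ Q := by
  simp [projection]

theorem mem_doubled : y ∈ doubled Q ↔ (0, y) ∈ Q ∧ (1, y) ∈ Q := by
  simp [doubled]

theorem card_eq_card_projection_add_card_doubled (hQ : ∀ c ∈ Q, c.1 < 2) :
    #Q = #(projection Q) + #(doubled Q) := by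
  have hprojection : projection Q = layer Q 0 ∪ layer Q 1 := by
    ext y
    simp only [mem_projection, mem_union, mem_layer]
    refine ⟨fun ⟨l, hl⟩ => ?_, fun h => h.elim (⟨0, ·⟩) (⟨1, ·⟩)⟩
    have := hQ _ hl
    interval_cases l <;> tauto
  have hlayer (l : ℕ) : #(layer Q l) = #(Q.filter (·.1 = l)) :=
    card_image_of_injOn fun u hu v hv h =>
      Prod.ext ((mem_filter.1 hu).2.trans (mem_filter.1 hv).2.symm) h
  have hsplit : #Q = #(Q.filter (·.1 = 0)) + #(Q.filter (·.1 = 1)) := by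
    rw [← card_union_of_disjoint (disjoint_filter.2 fun _ _ h => by omega), ← filter_or,
      filter_true_of_mem fun c hc => by have := hQ c hc; omega]
  rw [hsplit, ← hlayer, ← hlayer, hprojection, doubled, card_union_add_card_inter]

theorem StepIn.horizontal_of_notMem_doubled (hQ : ∀ c ∈ Q, c.1 < 2) {u v : ℕ × ℕ × ℕ}
    (h : StepIn Q Adj3 u v) (hu : u.2 ∉ doubled Q) : u.1 = v.1 ∧ Adj2 u.2 v.2 := by
  obtain ⟨huQ, hvQ, hhor | ⟨hcol, hlay⟩⟩ := h
  · exact hhor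
  · refine absurd ?_ hu
    have := hQ u huQ
    have := hQ v hvQ
    obtain ⟨u₁, u₂⟩ := u
    obtain ⟨v₁, v₂⟩ := v
    simp only at hcol hlay this ⊢
    subst hcol
    rw [mem_doubled]
    rcases (by omega : u₁ = 0 ∧ v₁ = 1 ∨ u₁ = 1 ∧ v₁ = 0) with ⟨rfl, rfl⟩ | ⟨rfl, rfl⟩ <;>
      tauto

end Layers

section Polyomino3D

variable {Q : Finset (ℕ × ℕ × ℕ)} {a b k : ℕ}

theorem Connected3.projection (h : Connected3 Q) : Connected2 (projection Q) := by
  intro _ hu' _ hv'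
  obtain ⟨u, hu, rfl⟩ := mem_image.1 hu'
  obtain ⟨v, hv, rfl⟩ := mem_image.1 hv'
  refine ReflTransGen.lift' Prod.snd ?_ _ _ (h u hu v hv)
  rintro p q ⟨hp, hq, ⟨-, hpq⟩ | ⟨hpq, -⟩⟩
  · exact .single ⟨mem_image_of_mem _ hp, mem_image_of_mem _ hq, hpq⟩
  · exact show ReflTransGen _ p.2 q.2 by rw [hpq]

theorem Inscribed3.projection (h : Inscribed3 a b k Q) : Inscribed2 b k (projection Q) := by
  obtain ⟨hbox, -, -, ⟨c₁, hc₁, h₁⟩, ⟨c₂, hc₂, h₂⟩, ⟨c₃, hc₃, h₃⟩, ⟨c₄, hc₄, h₄⟩⟩ := h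
  refine ⟨?_, ⟨_, mem_image_of_mem _ hc₁, h₁⟩, ⟨_, mem_image_of_mem _ hc₂, h₂⟩,
    ⟨_, mem_image_of_mem _ hc₃, h₃⟩, ⟨_, mem_image_of_mem _ hc₄, h₄⟩⟩
  intro _ hc'
  obtain ⟨c, hc, rfl⟩ := mem_image.1 hc'
  exact (hbox c hc).2

theorem MinPoly3D.fst_lt_two (hQ : MinPoly3D 2 b k Q) : ∀ c ∈ Q, c.1 < 2 :=
  fun c hc => (hQ.2.2.1.1 c hc).1

/-- Without a doubled column no step changes the layer, yet both layers are occupied. -/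
theorem MinPoly3D.card_doubled (hQ : MinPoly3D 2 b k Q) : #(doubled Q) = 1 := by
  have hbox := hQ.fst_lt_two
  have hsplit := card_eq_card_projection_add_card_doubled hbox
  obtain ⟨hne, hconn, hins, hcard⟩ := hQ
  have hlower := hins.projection.add_le_card_add_one hconn.projection (hne.image _)
  suffices (doubled Q).Nonempty by have := this.card_pos; omega
  by_contra hempty
  obtain ⟨-, ⟨c, hc, hc0⟩, ⟨d, hd, hd1⟩, -⟩ := hins
  have : c.1 = d.1 := (hconn c hc d hd).eq_of_forall_imp_eq fun u v h =>
    (StepIn.horizontal_of_notMem_doubled hbox h (by simp_all)).1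
  omega

theorem MinPoly3D.minPoly2D_projection (hQ : MinPoly3D 2 b k Q) :
    MinPoly2D b k (projection Q) := by
  have hsplit := card_eq_card_projection_add_card_doubled hQ.fst_lt_two
  have hdoubled := hQ.card_doubled
  obtain ⟨hne, hconn, hins, hcard⟩ := hQ
  exact ⟨hne.image _, hconn.projection, hins.projection, by omega⟩

/-- Follow a path from `(l, y)` to the doubled column `x` up to its first visit of that column:
it stays in layer `l` and its projection is a path from `y` to the branch root of `y`. -/
theorem MinPoly3D.mem_branchRoot (hQ : MinPoly3D 2 b k Q) {x y : ℕ × ℕ} {l : ℕ}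
    (hx : doubled Q = {x}) (hy : (l, y) ∈ Q) (hyx : y ≠ x) :
    (l, branchRoot (projection Q) x y) ∈ Q := by
  have hx0 : (0, x) ∈ Q := (mem_doubled.1 (hx ▸ mem_singleton_self x)).1
  obtain ⟨c, d, hpath, hcd, hc, rfl⟩ :=
    (hQ.2.1 _ hy _ hx0).exists_first_entry (p := (·.2 = x)) hyx rfl
  have hhor (u v : ℕ × ℕ × ℕ) (h : StepIn (Q.filter (¬ ·.2 = d.2)) Adj3 u v) :
      u.1 = v.1 ∧ StepIn ((projection Q).erase d.2) Adj2 u.2 v.2 := by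
    obtain ⟨hu, hv, huv⟩ := h
    rw [mem_filter] at hu hv
    obtain ⟨hlay, hadj⟩ := StepIn.horizontal_of_notMem_doubled hQ.fst_lt_two
      (show StepIn Q Adj3 u v from ⟨hu.1, hv.1, huv⟩) (by simp [hx, hu.2])
    exact ⟨hlay, mem_erase.2 ⟨hu.2, mem_image_of_mem _ hu.1⟩,
      mem_erase.2 ⟨hv.2, mem_image_of_mem _ hv.1⟩, hadj⟩
  have hlayer : l = c.1 := hpath.eq_of_forall_imp_eq (f := Prod.fst) fun u v h => (hhor u v h).1
  have hcx := StepIn.horizontal_of_notMem_doubled hQ.fst_lt_two hcd (by simp [hx, hc])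
  have hroot : IsBranchRoot (projection Q) d.2 y c.2 :=
    ⟨mem_image_of_mem _ hcd.1, hcx.2.symm,
      ReflTransGen.lift Prod.snd (fun u v h => (hhor u v h).2) _ _ hpath⟩
  rw [hroot.branchRoot_eq hQ.minPoly2D_projection.isTree (mem_image_of_mem _ hcd.2.1), hlayer]
  exact hcd.1

end Polyomino3D

noncomputable def branchLayer (P : Finset (ℕ × ℕ)) (x : ℕ × ℕ) (A : Finset (ℕ × ℕ))
    (y : ℕ × ℕ) : ℕ :=
  if branchRoot P x y ∈ A then 1 else 0

noncomputable def prismLift (P : Finset (ℕ × ℕ)) (x : ℕ × ℕ) (A : Finset (ℕ × ℕ)) :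
    Finset (ℕ × ℕ × ℕ) :=
  (range 2 ×ˢ P).filter fun c => c.2 = x ∨ c.1 = branchLayer P x A c.2

section PrismLift

variable {P A : Finset (ℕ × ℕ)} {x : ℕ × ℕ} {b k : ℕ}

theorem branchLayer_lt_two (P : Finset (ℕ × ℕ)) (x : ℕ × ℕ) (A : Finset (ℕ × ℕ)) (y : ℕ × ℕ) :
    branchLayer P x A y < 2 := by
  unfold branchLayer; split_ifs <;> omega

@[simp]
theorem mem_prismLift {l : ℕ} {y : ℕ × ℕ} :
    (l, y) ∈ prismLift P x A ↔ l < 2 ∧ y ∈ P ∧ (y = x ∨ l = branchLayer P x A y) := by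
  simp [prismLift, and_assoc]

theorem fst_lt_two_of_mem_prismLift : ∀ c ∈ prismLift P x A, c.1 < 2 :=
  fun _ hc => (mem_prismLift.1 hc).1

theorem exists_mem_prismLift {y : ℕ × ℕ} (hy : y ∈ P) : ∃ l, (l, y) ∈ prismLift P x A :=
  ⟨_, mem_prismLift.2 ⟨branchLayer_lt_two P x A y, hy, .inr rfl⟩⟩

theorem projection_prismLift : projection (prismLift P x A) = P := by
  ext y
  rw [mem_projection]
  exact ⟨fun ⟨_, h⟩ => (mem_prismLift.1 h).2.1, exists_mem_prismLift⟩

theorem doubled_prismLift (hx : x ∈ P) : doubled (prismLift P x A) = {x} := by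
  ext y
  simp only [mem_doubled, mem_prismLift, mem_singleton]
  constructor
  · rintro ⟨⟨-, -, h₀⟩, -, -, h₁⟩
    by_contra hyx
    have := h₀.resolve_left hyx
    have := h₁.resolve_left hyx
    omega
  · rintro rfl
    simp [hx]

theorem card_prismLift (hx : x ∈ P) : #(prismLift P x A) = #P + 1 := by
  rw [card_eq_card_projection_add_card_doubled fst_lt_two_of_mem_prismLift, projection_prismLift,
    doubled_prismLift hx, card_singleton]

theorem Connected2.prismLift (hconn : Connected2 P) (htree : (cellGraph P).IsTree) (hx : x ∈ P)
    (A : Finset (ℕ × ℕ)) : Connected3 (prismLift P x A) := by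
  set L := _root_.prismLift P x A
  have hcolumn (l : ℕ) (hl : l < 2) : ReflTransGen (StepIn L Adj3) (l, x) (0, x) := by
    interval_cases l
    · exact .refl
    · exact .single ⟨by simp [L, hx], by simp [L, hx], .inr ⟨rfl, .inr rfl⟩⟩
  have hreach : ∀ c ∈ L, ReflTransGen (StepIn L Adj3) c (0, x) := by
    rintro ⟨l, y⟩ hc
    obtain ⟨hl, hy, hly⟩ := mem_prismLift.1 hc
    by_cases hyx : y = x
    · exact hyx ▸ hcolumn l hl
    obtain ⟨hz, hxz, hyz⟩ := hconn.isBranchRoot_branchRoot hx hy hyx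
    set z := branchRoot P x y
    have hly : l = branchLayer P x A y := hly.resolve_left hyx
    have hlz : l = branchLayer P x A z := by
      rw [hly, branchLayer, branchLayer, branchRoot_eq_self htree hx hz hxz]
    -- branch roots, hence layers, are constant along paths avoiding `x`
    have hbranch :
        ReflTransGen (StepIn L Adj3) (branchLayer P x A y, y) (branchLayer P x A z, z) := by
      refine ReflTransGen.lift (fun u => (branchLayer P x A u, u)) (fun u v h => ?_) _ _ hyz
      have hroot := branchRoot_eq_of_stepIn hconn htree hx h
      obtain ⟨hu, hv, huv⟩ := h
      exact ⟨mem_prismLift.2 ⟨branchLayer_lt_two P x A u, mem_of_mem_erase hu, .inr rfl⟩,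
        mem_prismLift.2 ⟨branchLayer_lt_two P x A v, mem_of_mem_erase hv, .inr rfl⟩,
        .inl ⟨by simp only [branchLayer, hroot], huv⟩⟩
    rw [← hly, ← hlz] at hbranch
    have hzx : StepIn L Adj3 (l, z) (l, x) :=
      ⟨mem_prismLift.2 ⟨hl, hz, .inr hlz⟩, mem_prismLift.2 ⟨hl, hx, .inl rfl⟩, .inl ⟨rfl, hxz.symm⟩⟩
    exact hbranch.trans (.head hzx (hcolumn l hl))
  exact fun c hc d hd => (hreach c hc).trans (Std.Symm.symm _ _ (hreach d hd))

theorem Inscribed2.prismLift (hins : Inscribed2 b k P) (hx : x ∈ P) (A : Finset (ℕ × ℕ)) :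
    Inscribed3 2 b k (prismLift P x A) := by
  obtain ⟨hbox, ⟨c₁, hc₁, h₁⟩, ⟨c₂, hc₂, h₂⟩, ⟨c₃, hc₃, h₃⟩, ⟨c₄, hc₄, h₄⟩⟩ := hins
  obtain ⟨l₁, hl₁⟩ := exists_mem_prismLift (x := x) (A := A) hc₁
  obtain ⟨l₂, hl₂⟩ := exists_mem_prismLift (x := x) (A := A) hc₂
  obtain ⟨l₃, hl₃⟩ := exists_mem_prismLift (x := x) (A := A) hc₃
  obtain ⟨l₄, hl₄⟩ := exists_mem_prismLift (x := x) (A := A) hc₄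
  refine ⟨?_, ⟨(0, x), by simp [hx], rfl⟩, ⟨(1, x), by simp [hx], rfl⟩, ⟨_, hl₁, h₁⟩,
    ⟨_, hl₂, h₂⟩, ⟨_, hl₃, h₃⟩, ⟨_, hl₄, h₄⟩⟩
  rintro ⟨l, y⟩ hc
  obtain ⟨hl, hy, -⟩ := mem_prismLift.1 hc
  exact ⟨hl, hbox y hy⟩

theorem MinPoly2D.prismLift (hP : MinPoly2D b k P) (hx : x ∈ P) (A : Finset (ℕ × ℕ)) :
    MinPoly3D 2 b k (prismLift P x A) := by
  have htree := hP.isTree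
  obtain ⟨hne, hconn, hins, hcard⟩ := hP
  have := card_pos.2 hne
  refine ⟨⟨(0, x), by simp [hx]⟩, hconn.prismLift htree hx A, hins.prismLift hx A, ?_⟩
  rw [card_prismLift hx]
  omega

end PrismLift

section Fibres

variable {Q : Finset (ℕ × ℕ × ℕ)} {P : Finset (ℕ × ℕ)} {x : ℕ × ℕ} {b k : ℕ}

theorem MinPoly3D.doubled_eq_singleton (hQ : MinPoly3D 2 b k Q) (hx : x ∈ doubled Q) :
    doubled Q = {x} := by
  obtain ⟨a, ha⟩ := card_eq_one.1 hQ.card_doubled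
  rw [ha] at hx ⊢
  rw [mem_singleton.1 hx]

theorem MinPoly3D.eq_branchLayer (hQ : MinPoly3D 2 b k Q) (hx : doubled Q = {x}) {l : ℕ}
    {y : ℕ × ℕ} (hy : (l, y) ∈ Q) (hyx : y ≠ x) :
    l = branchLayer (projection Q) x
      (((projection Q).filter (Adj2 x)).filter fun z => (1, z) ∈ Q) y := by
  have hxQ : x ∈ projection Q :=
    mem_projection.2 ⟨0, (mem_doubled.1 (hx ▸ mem_singleton_self x)).1⟩
  obtain ⟨hz, hxz, -⟩ :=
    hQ.minPoly2D_projection.2.1.isBranchRoot_branchRoot hxQ (mem_projection.2 ⟨l, hy⟩) hyx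
  have hlz := hQ.mem_branchRoot hx hy hyx
  have hzx : branchRoot (projection Q) x y ∉ doubled Q := by
    rw [hx, mem_singleton]
    exact hxz.ne.symm
  rw [mem_doubled] at hzx
  have := hQ.fst_lt_two _ hy
  unfold branchLayer
  interval_cases l <;> simp_all

theorem MinPoly3D.prismLift_eq (hQ : MinPoly3D 2 b k Q) (hx : doubled Q = {x}) :
    prismLift (projection Q) x (((projection Q).filter (Adj2 x)).filter fun z => (1, z) ∈ Q) =
      Q := by
  ext ⟨l, y⟩
  rw [mem_prismLift]
  constructor
  · rintro ⟨hl, hy, hly⟩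
    by_cases hyx : y = x
    · subst hyx
      have := mem_doubled.1 (hx ▸ mem_singleton_self y)
      interval_cases l <;> tauto
    · obtain ⟨l', hl'⟩ := mem_projection.1 hy
      rwa [hly.resolve_left hyx, ← hQ.eq_branchLayer hx hl' hyx]
  · intro hc
    exact ⟨hQ.fst_lt_two _ hc, mem_projection.2 ⟨l, hc⟩,
      or_iff_not_imp_left.2 (hQ.eq_branchLayer hx hc)⟩

noncomputable def minPoly3Ds (b k : ℕ) : Finset (Finset (ℕ × ℕ × ℕ)) :=
  (range 2 ×ˢ (range b ×ˢ range k)).powerset.filter (MinPoly3D 2 b k)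

theorem mem_minPoly3Ds : Q ∈ minPoly3Ds b k ↔ MinPoly3D 2 b k Q :=
  ⟨fun h => (mem_filter.1 h).2, fun hQ =>
    mem_filter.2 ⟨mem_powerset.2 fun c hc => by simpa [mem_product] using hQ.2.2.1.1 c hc, hQ⟩⟩

/-- The polyominoes over `P` doubled at `x` correspond to the sets of neighbours of `x` whose
branches lie in layer `1`. -/
theorem MinPoly2D.card_filter_minPoly3Ds (hP : MinPoly2D b k P) (hx : x ∈ P) :
    #((minPoly3Ds b k).filter fun Q => projection Q = P ∧ x ∈ doubled Q) = 2 ^ deg2 P x := by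
  rw [deg2, ← card_powerset]
  refine card_bij' (fun Q _ => (P.filter (Adj2 x)).filter fun z => (1, z) ∈ Q)
    (fun A _ => _root_.prismLift P x A) (fun _ _ => mem_powerset.2 (filter_subset _ _)) ?_ ?_ ?_
  · intro A _
    rw [mem_filter, mem_minPoly3Ds, projection_prismLift, doubled_prismLift hx]
    exact ⟨hP.prismLift hx A, rfl, mem_singleton_self x⟩
  · intro Q hQF
    obtain ⟨hQ, rfl, hxQ⟩ := mem_filter.1 hQF
    have hQ := mem_minPoly3Ds.1 hQ
    exact hQ.prismLift_eq (hQ.doubled_eq_singleton hxQ)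
  · intro A hA
    ext z
    simp only [mem_filter, mem_prismLift, branchLayer]
    constructor
    · rintro ⟨⟨hz, hxz⟩, -, -, hzx | h⟩
      · exact absurd hzx hxz.ne.symm
      · rw [branchRoot_eq_self hP.isTree hx hz hxz] at h
        split_ifs at h with hzA
        exact hzA
    · intro hzA
      obtain ⟨hz, hxz⟩ := mem_filter.1 (mem_powerset.1 hA hzA)
      simp [hz, hxz, branchRoot_eq_self hP.isTree hx hz hxz, hzA]

theorem doubled_subset_projection : doubled Q ⊆ projection Q :=
  fun _ hy => mem_projection.2 ⟨0, (mem_doubled.1 hy).1⟩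

/-- Each minimal 3D polyomino over `P` has exactly one doubled cell, so counting pairs
(polyomino, doubled cell) counts the polyominoes. -/
theorem MinPoly2D.card_filter_projection_eq (hP : MinPoly2D b k P) :
    #((minPoly3Ds b k).filter (projection · = P)) = ∑ x ∈ P, 2 ^ deg2 P x := by
  set F := (minPoly3Ds b k).filter (projection · = P)
  have hone (Q : Finset (ℕ × ℕ × ℕ)) (hQF : Q ∈ F) :
      #(P.bipartiteBelow (fun x Q => x ∈ doubled Q) Q) = 1 := by
    obtain ⟨hQ, rfl⟩ := mem_filter.1 hQF
    rw [bipartiteBelow, filter_mem_eq_inter, inter_eq_right.2 doubled_subset_projection]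
    exact (mem_minPoly3Ds.1 hQ).card_doubled
  calc #F = ∑ Q ∈ F, #(P.bipartiteBelow (fun x Q => x ∈ doubled Q) Q) := by
        rw [card_eq_sum_ones]
        exact sum_congr rfl fun Q hQ => (hone Q hQ).symm
    _ = ∑ x ∈ P, #(F.bipartiteAbove (fun x Q => x ∈ doubled Q) x) :=
        (sum_card_bipartiteAbove_eq_sum_card_bipartiteBelow _).symm
    _ = ∑ x ∈ P, 2 ^ deg2 P x := sum_congr rfl fun x hx => by
        rw [bipartiteAbove, filter_filter]
        exact hP.card_filter_minPoly3Ds hx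

end Fibres

theorem prism2_count_general (b k : ℕ) :
    {Q : Finset (ℕ × ℕ × ℕ) | MinPoly3D 2 b k Q}.ncard =
      ∑ P ∈ ((Finset.range b ×ˢ Finset.range k).powerset.filter
          fun P => MinPoly2D b k P),
        ∑ x ∈ P, 2 ^ deg2 P x := by
  have hset : {Q : Finset (ℕ × ℕ × ℕ) | MinPoly3D 2 b k Q} = ↑(minPoly3Ds b k) := by
    ext Q
    simp [mem_minPoly3Ds]
  rw [hset, Set.ncard_coe_finset, card_eq_sum_card_fiberwise (f := projection) fun Q hQ => ?_]
  · exact sum_congr rfl fun P hP => (mem_filter.1 hP).2.card_filter_projection_eq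
  · have hP := (mem_minPoly3Ds.1 hQ).minPoly2D_projection
    exact mem_filter.2 ⟨mem_powerset.2 hP.2.2.1.subset_range_product, hP⟩

/-- The number of minimal 3D polyominoes inscribed in a `2 × b × k` prism equals
`Σ_P Σ_{x ∈ P} 2^{deg x}`, summed over the minimal 2D polyominoes `P` inscribed
in a `b × k` rectangle. -/
theorem prism2_count (b k : ℕ) (hb : 1 ≤ b) (hk : 1 ≤ k) :
    {Q : Finset (ℕ × ℕ × ℕ) | MinPoly3D 2 b k Q}.ncard =
      ∑ P ∈ ((Finset.range b ×ˢ Finset.range k).powerset.filter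
          fun P => MinPoly2D b k P),
        ∑ x ∈ P, 2 ^ deg2 P x :=
  prism2_count_general b k
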